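/- arXiv:2601.00401 — 2 statements merged into one kernel-verified Lean document; each statement's English description precedes it below -/
import Mathlib

section
/- If 0 < β < α < 1, then no Vitali set is (α,β)-winning: Alice has no winning strategy in Schmidt's (α,β)-game whose target is a Vitali set. -/
namespace Schmidt

/-- A closed interval, given by its two endpoints. -/
abbrev Ivl := ℝ × ℝ

/-- The diameter (length) of an interval. -/
def diam (I : Ivl) : ℝ := I.2 - I.1

/-- The set of points of an interval. -/
def toSet (I : Ivl) : Set ℝ := Set.Icc I.1 I.2

/-- `Sub I J` means the interval `I` is contained in the interval `J`. -/
def Sub (I J : Ivl) : Prop := toSet I ⊆ toSet J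

/-- A strategy: a function producing a move from the finite sequence of
the opponent's moves so far. -/
abbrev Strategy := List Ivl → Ivl

/-- The list of Bob's moves `B 0, …, B n`. -/
def hist (B : ℕ → Ivl) (n : ℕ) : List Ivl := List.ofFn (fun i : Fin (n + 1) => B i)

/-- Bob's sequence of moves `B` is a legal play against Alice's strategy `σ`
in the `(α,β)`-game: `B 0` has positive diameter and each `B (n+1)` is a
subinterval of Alice's previous move `σ (hist B n)` of `β` times its diameter. -/
def BobPlays (β : ℝ) (σ : Strategy) (B : ℕ → Ivl) : Prop :=
  0 < diam (B 0) ∧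
  ∀ n, Sub (B (n + 1)) (σ (hist B n)) ∧ diam (B (n + 1)) = β * diam (σ (hist B n))

/-- `σ` is a legal strategy for Alice in the `(α,β)`-game: whenever Bob's
moves so far are legal, Alice's response is a subinterval of Bob's last move
of `α` times its diameter. -/
def AliceLegal (α β : ℝ) (σ : Strategy) : Prop :=
  ∀ B : ℕ → Ivl, ∀ n : ℕ, 0 < diam (B 0) →
    (∀ m, m < n → Sub (B (m + 1)) (σ (hist B m)) ∧
      diam (B (m + 1)) = β * diam (σ (hist B m))) →
    Sub (σ (hist B n)) (B n) ∧ diam (σ (hist B n)) = α * diam (B n)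

/-- `σ` is a winning strategy for Alice in Schmidt's `(α,β)`-game with target `T`:
it is legal, and in every run against it every point of the intersection of
Alice's moves lies in `T`. -/
def AliceWinsWith (α β : ℝ) (T : Set ℝ) (σ : Strategy) : Prop :=
  AliceLegal α β σ ∧
  ∀ B : ℕ → Ivl, BobPlays β σ B →
    ∀ x : ℝ, (∀ n, x ∈ toSet (σ (hist B n))) → x ∈ T

/-- `T` is `(α,β)`-winning: Alice has a winning strategy. -/
def Winning (α β : ℝ) (T : Set ℝ) : Prop := ∃ σ, AliceWinsWith α β T σ

/-- The list of Alice's moves `A 0, …, A (n-1)`. -/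
def histA (A : ℕ → Ivl) (n : ℕ) : List Ivl := List.ofFn (fun i : Fin n => A i)

/-- Alice's sequence of moves `A` is a legal play against Bob's strategy `τ`. -/
def AlicePlays (α : ℝ) (τ : Strategy) (A : ℕ → Ivl) : Prop :=
  ∀ n, Sub (A n) (τ (histA A n)) ∧ diam (A n) = α * diam (τ (histA A n))

/-- `τ` is a legal strategy for Bob in the `(α,β)`-game. -/
def BobLegal (α β : ℝ) (τ : Strategy) : Prop :=
  0 < diam (τ []) ∧
  ∀ A : ℕ → Ivl, ∀ n : ℕ,
    (∀ m, m ≤ n → Sub (A m) (τ (histA A m)) ∧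
      diam (A m) = α * diam (τ (histA A m))) →
    Sub (τ (histA A (n + 1))) (A n) ∧ diam (τ (histA A (n + 1))) = β * diam (A n)

/-- `τ` is a winning strategy for Bob in Schmidt's `(α,β)`-game with target `T`. -/
def BobWinsWith (α β : ℝ) (T : Set ℝ) (τ : Strategy) : Prop :=
  BobLegal α β τ ∧
  ∀ A : ℕ → Ivl, AlicePlays α τ A →
    ∀ x : ℝ, (∀ n, x ∈ toSet (A n)) → x ∉ T

/-- Bob has a winning strategy in the `(α,β)`-game with target `T`. -/
def BobWinning (α β : ℝ) (T : Set ℝ) : Prop := ∃ τ, BobWinsWith α β T τ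

/-- `V` is a Vitali set: it contains exactly one representative of each
coset of `ℚ` in `ℝ`. -/
def IsVitali (V : Set ℝ) : Prop :=
  ∀ x : ℝ, ∃! v : ℝ, v ∈ V ∧ ∃ q : ℚ, x - v = (q : ℝ)

/-- `P` is a partial Vitali set: it contains at most one representative of
each coset of `ℚ` in `ℝ`. -/
def IsPartialVitali (P : Set ℝ) : Prop :=
  ∀ x ∈ P, ∀ y ∈ P, (∃ q : ℚ, x - y = (q : ℝ)) → x = y

/-- `T` is `(α,β,I)`-winning: Alice has a winning strategy in Schmidt's
`(α,β)`-game with target `T` when Bob's first move is required to be `I`. -/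
def WinningFrom (α β : ℝ) (T : Set ℝ) (I : Ivl) : Prop :=
  ∃ σ : Strategy,
    (∀ B : ℕ → Ivl, B 0 = I → ∀ n : ℕ,
      (∀ m, m < n → Sub (B (m + 1)) (σ (hist B m)) ∧
        diam (B (m + 1)) = β * diam (σ (hist B m))) →
      Sub (σ (hist B n)) (B n) ∧ diam (σ (hist B n)) = α * diam (B n)) ∧
    (∀ B : ℕ → Ivl, B 0 = I → BobPlays β σ B →
      ∀ x : ℝ, (∀ n, x ∈ toSet (σ (hist B n))) → x ∈ T)


/-
Against a legal strategy `σ` for Alice, Bob plays two games at once. In the first he opens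
with `[0, 1]`; in the second he answers each move `A n` of Alice in the first game by its
translate `A n + c`. Alice's reply `A' n ⊆ A n + c` in the second game has length
`α · diam (A n) ≥ β · diam (A n)`, so Bob's next move in the first game can be taken inside
`A' n - c`; then `A (n+1) + c ⊆ A' n` is again a legal move in the second game. The point `x`
common to Alice's moves in the second game therefore has `x - c` common to her moves in the
first, so if `σ` wins, both `x` and `x - c` lie in the target. For a Vitali set and `c = 1`
this is impossible.
-/

def shift (c : ℝ) (I : Ivl) : Ivl := (I.1 + c, I.2 + c)

def leftPart (I : Ivl) (d : ℝ) : Ivl := (I.1, I.1 + d)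

@[simp]
lemma diam_shift (c : ℝ) (I : Ivl) : diam (shift c I) = diam I := by
  simp only [diam, shift]; ring

@[simp]
lemma shift_shift (a b : ℝ) (I : Ivl) : shift a (shift b I) = shift (b + a) I := by
  simp only [shift, add_assoc]

@[simp]
lemma shift_zero (I : Ivl) : shift 0 I = I := by
  simp [shift]

@[simp]
lemma diam_leftPart (I : Ivl) (d : ℝ) : diam (leftPart I d) = d := by
  simp [diam, leftPart]

lemma Sub.trans {I J K : Ivl} (hIJ : Sub I J) (hJK : Sub J K) : Sub I K :=
  Set.Subset.trans hIJ hJK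

lemma mem_toSet_shift {c x : ℝ} {I : Ivl} : x ∈ toSet (shift c I) ↔ x - c ∈ toSet I := by
  simp only [toSet, shift, Set.mem_Icc, le_sub_iff_add_le, sub_le_iff_le_add]

lemma Sub.shift {I J : Ivl} (h : Sub I J) (c : ℝ) : Sub (shift c I) (shift c J) :=
  fun _ hx => mem_toSet_shift.2 (h (mem_toSet_shift.1 hx))

lemma leftPart_sub {I : Ivl} {d : ℝ} (hd : d ≤ diam I) : Sub (leftPart I d) I :=
  Set.Icc_subset_Icc le_rfl (show I.1 + d ≤ I.2 by unfold diam at hd; linarith)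

lemma IsVitali.isPartialVitali {V : Set ℝ} (hV : IsVitali V) : IsPartialVitali V := by
  rintro x hx y hy ⟨q, hq⟩
  obtain ⟨v, -, hv⟩ := hV x
  exact (hv x ⟨hx, 0, by simp⟩).trans (hv y ⟨hy, q, hq⟩).symm

lemma take_hist (B : ℕ → Ivl) {k n : ℕ} (h : k ≤ n) : (hist B n).take (k + 1) = hist B k := by
  rw [hist, ← Fin.ofFn_take_eq_take_ofFn (by omega)]
  rfl

def play (I : Ivl) (f : List Ivl → Ivl) : ℕ → Ivl
  | 0 => I
  | n + 1 => f (List.ofFn fun i : Fin (n + 1) => play I f i)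

lemma play_succ (I : Ivl) (f : List Ivl → Ivl) (n : ℕ) :
    play I f (n + 1) = f (hist (play I f) n) := by
  rw [play]
  rfl

def BobStep (β : ℝ) (σ : Strategy) (B : ℕ → Ivl) (n : ℕ) : Prop :=
  Sub (B (n + 1)) (σ (hist B n)) ∧ diam (B (n + 1)) = β * diam (σ (hist B n))

section AliceLegal

variable {α β : ℝ} {σ : Strategy} {B : ℕ → Ivl}

lemma AliceLegal.move (hσ : AliceLegal α β σ) (hB : BobPlays β σ B) (n : ℕ) :
    Sub (σ (hist B n)) (B n) ∧ diam (σ (hist B n)) = α * diam (B n) :=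
  hσ B n hB.1 fun m _ => hB.2 m

lemma AliceLegal.diam_move_nonneg (hσ : AliceLegal α β σ) (hα : 0 ≤ α) (hβ : 0 ≤ β)
    (hB0 : 0 < diam (B 0)) : ∀ n, (∀ m < n, BobStep β σ B m) → 0 ≤ diam (σ (hist B n))
  | 0, hB => by
    rw [(hσ B 0 hB0 hB).2]
    exact mul_nonneg hα hB0.le
  | n + 1, hB => by
    rw [(hσ B (n + 1) hB0 hB).2, (hB n n.lt_succ_self).2]
    exact mul_nonneg hα <| mul_nonneg hβ <|
      hσ.diam_move_nonneg hα hβ hB0 n fun m hm => hB m (hm.trans n.lt_succ_self)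

lemma AliceLegal.exists_mem_moves (hσ : AliceLegal α β σ) (hα : 0 ≤ α) (hβ : 0 ≤ β)
    (hB : BobPlays β σ B) : ∃ x, ∀ n, x ∈ toSet (σ (hist B n)) := by
  have hle (n : ℕ) : (σ (hist B n)).1 ≤ (σ (hist B n)).2 :=
    sub_nonneg.1 (hσ.diam_move_nonneg hα hβ hB.1 n fun m _ => hB.2 m)
  have hanti : Antitone fun n => toSet (σ (hist B n)) :=
    antitone_nat_of_succ_le fun n => ((hσ.move hB (n + 1)).1.trans (hB.2 n).1)
  exact ⟨_, Set.mem_iInter.1 (ciSup_mem_iInter_Icc_of_antitone_Icc hanti hle)⟩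

end AliceLegal

section Mirror

variable (σ : Strategy) (β c : ℝ)

/-- Bob's move in the first game after its history `h`: the history of the second game is
`shift c (σ (h.take (k + 1)))`, `k < h.length`, and Bob takes the leftmost subinterval of
length `β · diam (σ h)` of `A' - c`, where `A'` is Alice's reply to it. -/
def mirrorRule (h : List Ivl) : Ivl :=
  leftPart (shift (-c) (σ (List.ofFn fun k : Fin h.length => shift c (σ (h.take (k + 1))))))
    (β * diam (σ h))

def basePlay : ℕ → Ivl := play (0, 1) (mirrorRule σ β c)

def shiftedPlay (n : ℕ) : Ivl := shift c (σ (hist (basePlay σ β c) n))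

lemma basePlay_succ (n : ℕ) :
    basePlay σ β c (n + 1) =
      leftPart (shift (-c) (σ (hist (shiftedPlay σ β c) n)))
        (β * diam (σ (hist (basePlay σ β c) n))) := by
  have hlen : (hist (basePlay σ β c) n).length = n + 1 := List.length_ofFn
  rw [basePlay, play_succ, mirrorRule, ← basePlay, List.ofFn_congr hlen]
  congr 4
  funext k
  simp only [Fin.val_cast, take_hist _ (Nat.lt_succ_iff.1 k.2), shiftedPlay]

variable {σ β c} {α : ℝ}

lemma bobPlays_basePlay_and_shiftedPlay (hσ : AliceLegal α β σ) (hβ : 0 ≤ β) (hβα : β < α) :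
    BobPlays β σ (basePlay σ β c) ∧ BobPlays β σ (shiftedPlay σ β c) := by
  set B := basePlay σ β c
  set B' := shiftedPlay σ β c
  have hα : 0 ≤ α := hβ.trans hβα.le
  have hB0 : 0 < diam (B 0) := by norm_num [B, basePlay, play, diam]
  have hB'0 : 0 < diam (B' 0) := by
    rw [show B' 0 = shift c (σ (hist B 0)) from rfl, diam_shift, (hσ B 0 hB0 nofun).2]
    exact mul_pos (hβ.trans_lt hβα) hB0
  suffices h : ∀ n, BobStep β σ B n ∧ BobStep β σ B' n from
    ⟨⟨hB0, fun n => (h n).1⟩, ⟨hB'0, fun n => (h n).2⟩⟩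
  intro n
  induction n using Nat.strong_induction_on with
  | _ n ih =>
  set A := σ (hist B n)
  set A' := σ (hist B' n)
  have hA' : Sub A' (shift c A) ∧ diam A' = α * diam A := by
    simpa only [B', shiftedPlay, diam_shift] using hσ B' n hB'0 fun m hm => (ih m hm).2
  have hB₁ : B (n + 1) = leftPart (shift (-c) A') (β * diam A) := basePlay_succ σ β c n
  have hB'₁ : B' (n + 1) = shift c (σ (hist B (n + 1))) := rfl
  have hBA' : Sub (B (n + 1)) (shift (-c) A') := by
    rw [hB₁]
    refine leftPart_sub ?_
    rw [diam_shift, hA'.2]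
    exact mul_le_mul_of_nonneg_right hβα.le
      (hσ.diam_move_nonneg hα hβ hB0 n fun m hm => (ih m hm).1)
  have hBstep : BobStep β σ B n :=
    ⟨hBA'.trans (by simpa using hA'.1.shift (-c)), by rw [hB₁, diam_leftPart]⟩
  have hA₁ : Sub (σ (hist B (n + 1))) (B (n + 1)) ∧
      diam (σ (hist B (n + 1))) = α * diam (B (n + 1)) :=
    hσ B (n + 1) hB0 fun m hm => (Nat.lt_succ_iff_lt_or_eq.1 hm).elim (ih m · |>.1) (· ▸ hBstep)
  refine ⟨hBstep, ?_, ?_⟩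
  · rw [hB'₁]
    simpa using (hA₁.1.trans hBA').shift c
  · rw [hB'₁, diam_shift, hA₁.2, hBstep.2, hA'.2]
    ring

end Mirror

lemma Winning.exists_mem_sub_mem {α β : ℝ} {T : Set ℝ} (hT : Winning α β T) (hβ : 0 ≤ β)
    (hβα : β < α) (c : ℝ) : ∃ x ∈ T, x - c ∈ T := by
  obtain ⟨σ, hσ, hwin⟩ := hT
  obtain ⟨hB, hB'⟩ := bobPlays_basePlay_and_shiftedPlay (c := c) hσ hβ hβα
  obtain ⟨x, hx⟩ := hσ.exists_mem_moves (hβ.trans hβα.le) hβ hB'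
  exact ⟨x, hwin _ hB' x hx,
    hwin _ hB (x - c) fun n => mem_toSet_shift.1 ((hσ.move hB' n).1 (hx n))⟩

theorem stmt4_general (α β : ℝ) (hβ0 : 0 < β) (hβα : β < α)
    (V : Set ℝ) (hV : IsVitali V) :
    ¬ Winning α β V := by
  intro hwin
  obtain ⟨x, hx, hx₁⟩ := hwin.exists_mem_sub_mem hβ0.le hβα 1
  have : x = x - 1 := hV.isPartialVitali x hx (x - 1) hx₁ ⟨1, by simp⟩
  linarith

/-- if `0 < β < α < 1` then no Vitali set is `(α,β)`-winning. -/
theorem stmt4 (α β : ℝ) (hβ0 : 0 < β) (hβα : β < α) (hα1 : α < 1)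
    (V : Set ℝ) (hV : IsVitali V) :
    ¬ Winning α β V :=
  stmt4_general α β hβ0 hβα V hV

end Schmidt
end

section
/- If 0 < α < 1/12 and α/(1 − 5α)² < β < 1, then there exists a Vitali set V that is (α,β)-winning: Alice has a winning strategy in Schmidt's (α,β)-game with target V for any initial move by Bob. -/
/-!
Alice plays on lattices. Facing an interval `[a, a + d]` she takes the largest scale
`S = e^{u - kΔ}` (`k ∈ ℤ`) with `S ≤ (1 - α) d` and answers `[m S, m S + α d]`, `m = ⌈a / S⌉`.
Bob's lengths shrink by `αβ = e^{-g}`, so an outcome `x` with starting length `d₀` meets the scale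
`e^{u - kΔ}` exactly when the phase `ζ` of `k Δ - u + log ((1 - α) d₀)` modulo `g` is below `Δ`,
and then `x e^{kΔ - u}` lies within `α/(1-α) e^ζ` above an integer.

Let `x - y = q ∈ ℚ \ {0}` be two outcomes. As `Δ / g` is irrational, infinitely many `k` make the
phase of `y` smaller than `ε`; since `Δ > g/2 + ε`, after possibly swapping `x` and `y` the phase
of `x` is then below `Δ`. So `q e^{kΔ - u}` lies within `α/(1-α) e^Δ` above or `α/(1-α) e^ε` below
an integer. By the Baire category theorem there is an offset `u` for which this fails for some
such `k`, for every `q`, provided `α/(1-α) (e^Δ + e^ε) < 1`; this can be arranged because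
`β > α/(1-2α)²` gives `α/(1-α) (e^{g/2} + 1) < 1`. Hence the outcomes form a partial Vitali set,
and any Vitali set containing them is winning.
-/

namespace Schmidt

open Real Set Filter Topology

section Vitali

def ratCosetSetoid : Setoid ℝ where
  r x y := ∃ q : ℚ, x - y = q
  iseqv :=
    { refl := fun _ => ⟨0, by simp⟩
      symm := fun ⟨q, h⟩ => ⟨-q, by push_cast; linarith⟩
      trans := fun ⟨q, h⟩ ⟨q', h'⟩ => ⟨q + q', by push_cast; linarith⟩ }

lemma isVitali_range_of_section (f : Quotient ratCosetSetoid → ℝ)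
    (hf : ∀ c, Quotient.mk _ (f c) = c) : IsVitali (range f) := by
  intro x
  refine ⟨f (Quotient.mk _ x), ⟨mem_range_self _, Quotient.exact (hf _).symm⟩, ?_⟩
  rintro _ ⟨⟨c, rfl⟩, hxc⟩
  exact congrArg f ((hf c).symm.trans (Quotient.sound hxc).symm)

open Classical in
noncomputable def cosetRep (P : Set ℝ) (c : Quotient ratCosetSetoid) : ℝ :=
  if h : ∃ p ∈ P, Quotient.mk _ p = c then h.choose else c.out

lemma mk_cosetRep (P : Set ℝ) (c : Quotient ratCosetSetoid) :
    Quotient.mk _ (cosetRep P c) = c := by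
  unfold cosetRep
  split_ifs with h
  · exact h.choose_spec.2
  · exact c.out_eq

lemma IsPartialVitali.subset_range_cosetRep {P : Set ℝ} (hP : IsPartialVitali P) :
    P ⊆ range (cosetRep P) := by
  intro p hp
  have h : ∃ p' ∈ P, Quotient.mk ratCosetSetoid p' = Quotient.mk _ p := ⟨p, hp, rfl⟩
  refine ⟨Quotient.mk _ p, ?_⟩
  rw [cosetRep, dif_pos h]
  exact hP _ h.choose_spec.1 _ hp (Quotient.exact h.choose_spec.2)

theorem IsPartialVitali.exists_isVitali_superset {P : Set ℝ} (hP : IsPartialVitali P) :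
    ∃ V, P ⊆ V ∧ IsVitali V :=
  ⟨_, hP.subset_range_cosetRep, isVitali_range_of_section _ (mk_cosetRep P)⟩

end Vitali

section Strategy

variable (α Δ u : ℝ)

noncomputable def scaleIndex (d : ℝ) : ℤ := ⌈(u - Real.log ((1 - α) * d)) / Δ⌉

noncomputable def scale (d : ℝ) : ℝ := Real.exp (u - scaleIndex α Δ u d * Δ)

noncomputable def aliceMove (I : Ivl) : Ivl :=
  (⌈I.1 / scale α Δ u (diam I)⌉ * scale α Δ u (diam I),
    ⌈I.1 / scale α Δ u (diam I)⌉ * scale α Δ u (diam I) + α * diam I)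

noncomputable def aliceStrategy : Strategy := fun l => aliceMove α Δ u (l.getLastD (0, 0))

variable {α Δ u}

lemma scale_le (hα : α < 1) (hΔ : 0 < Δ) {d : ℝ} (hd : 0 < d) :
    scale α Δ u d ≤ (1 - α) * d := by
  have hk : u - Real.log ((1 - α) * d) ≤ scaleIndex α Δ u d * Δ :=
    (div_le_iff₀ hΔ).1 (Int.le_ceil _)
  calc scale α Δ u d ≤ Real.exp (Real.log ((1 - α) * d)) := exp_le_exp.2 (by linarith)
    _ = (1 - α) * d := exp_log (mul_pos (sub_pos.2 hα) hd)

lemma diam_aliceMove (I : Ivl) : diam (aliceMove α Δ u I) = α * diam I := by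
  simp only [diam, aliceMove]
  ring

lemma aliceMove_sub (hα1 : α < 1) (hΔ : 0 < Δ) {I : Ivl} (hI : 0 < diam I) :
    Sub (aliceMove α Δ u I) I := by
  set S := scale α Δ u (diam I)
  have hS : 0 < S := exp_pos _
  have hSd : S ≤ (1 - α) * diam I := scale_le hα1 hΔ hI
  have h₁ : I.1 ≤ ⌈I.1 / S⌉ * S := (div_le_iff₀ hS).1 (Int.le_ceil _)
  have h₂ : (⌈I.1 / S⌉ - 1) * S < I.1 :=
    (lt_div_iff₀ hS).1 (by linarith [Int.ceil_lt_add_one (I.1 / S)])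
  refine Icc_subset_Icc h₁ ?_
  show ⌈I.1 / S⌉ * S + α * diam I ≤ I.2
  simp only [diam] at hSd ⊢
  linarith

lemma hist_getLastD (B : ℕ → Ivl) (n : ℕ) (z : Ivl) : (hist B n).getLastD z = B n := by
  rw [hist, List.ofFn_succ']
  simp

lemma aliceStrategy_hist (B : ℕ → Ivl) (n : ℕ) :
    aliceStrategy α Δ u (hist B n) = aliceMove α Δ u (B n) := by
  rw [aliceStrategy, hist_getLastD]

lemma diam_eq_pow_of_forall_lt {β : ℝ} {B : ℕ → Ivl} {n : ℕ}
    (hB : ∀ m < n, diam (B (m + 1)) = β * diam (aliceStrategy α Δ u (hist B m))) :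
    diam (B n) = (α * β) ^ n * diam (B 0) := by
  induction n with
  | zero => simp
  | succ n ih =>
    rw [hB n n.lt_succ_self, aliceStrategy_hist, diam_aliceMove,
      ih fun m hm => hB m (by omega)]
    ring

lemma aliceStrategy_legal {β : ℝ} (hα0 : 0 < α) (hα1 : α < 1) (hβ : 0 < β) (hΔ : 0 < Δ) :
    AliceLegal α β (aliceStrategy α Δ u) := by
  intro B n hB0 hB
  have hd : diam (B n) = (α * β) ^ n * diam (B 0) :=
    diam_eq_pow_of_forall_lt fun m hm => (hB m hm).2
  rw [aliceStrategy_hist]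
  exact ⟨aliceMove_sub hα1 hΔ (by rw [hd]; positivity), diam_aliceMove _⟩

end Strategy

def aliceTarget (α β Δ u : ℝ) : Set ℝ :=
  {x | ∃ d₀ > 0, ∀ n : ℕ, ∃ I : Ivl, diam I = (α * β) ^ n * d₀ ∧ x ∈ toSet (aliceMove α Δ u I)}

lemma mem_aliceTarget_of_bobPlays {α β Δ u : ℝ} {B : ℕ → Ivl}
    (hB : BobPlays β (aliceStrategy α Δ u) B) {x : ℝ}
    (hx : ∀ n, x ∈ toSet (aliceStrategy α Δ u (hist B n))) : x ∈ aliceTarget α β Δ u :=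
  ⟨diam (B 0), hB.1, fun n => ⟨B n, diam_eq_pow_of_forall_lt fun m _ => (hB.2 m).2,
    by simpa only [aliceStrategy_hist] using hx n⟩⟩

section Lattice

variable {α Δ u : ℝ}

lemma scaleIndex_eq (hΔ : 0 < Δ) {d ζ : ℝ} {k : ℤ}
    (hd : Real.log ((1 - α) * d) = u - k * Δ + ζ) (hζ : ζ ∈ Ico 0 Δ) :
    scaleIndex α Δ u d = k := by
  rw [scaleIndex, Int.ceil_eq_iff, hd]
  constructor
  · rw [lt_div_iff₀ hΔ]; linarith [hζ.2]
  · rw [div_le_iff₀ hΔ]; linarith [hζ.1]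

lemma exists_int_mem_Icc_of_mem_aliceMove (hα1 : α < 1) (hΔ : 0 < Δ) {I : Ivl}
    (hI : 0 < diam I) {ζ : ℝ} {k : ℤ} (hlog : Real.log ((1 - α) * diam I) = u - k * Δ + ζ)
    (hζ : ζ ∈ Ico 0 Δ) {x : ℝ} (hx : x ∈ toSet (aliceMove α Δ u I)) :
    ∃ a : ℤ, x * exp (k * Δ - u) ∈ Icc (a : ℝ) (a + α / (1 - α) * exp ζ) := by
  have hscale : scale α Δ u (diam I) = exp (u - k * Δ) := by
    rw [scale, scaleIndex_eq hΔ hlog hζ]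
  have hwidth : α * diam I = α / (1 - α) * exp ζ * exp (u - k * Δ) := by
    have h1α : (1 - α) ≠ 0 := (sub_pos.2 hα1).ne'
    rw [mul_assoc, ← exp_add, show ζ + (u - k * Δ) = Real.log ((1 - α) * diam I) by linarith,
      exp_log (mul_pos (sub_pos.2 hα1) hI)]
    field_simp
  obtain ⟨h₁, h₂⟩ := hx
  simp only [aliceMove, hscale, hwidth] at h₁ h₂
  rw [← neg_sub u, exp_neg, ← div_eq_mul_inv]
  refine ⟨⌈I.1 / exp (u - k * Δ)⌉, (le_div_iff₀ (exp_pos _)).2 h₁, ?_⟩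
  rw [div_le_iff₀ (exp_pos _)]
  linarith

lemma log_one_sub_mul_pow_mul {β g : ℝ} (hg : exp (-g) = α * β) {d₀ : ℝ}
    (hd₀ : 0 < (1 - α) * d₀) (n : ℕ) :
    Real.log ((1 - α) * ((α * β) ^ n * d₀)) = Real.log ((1 - α) * d₀) - n * g := by
  rw [← hg, ← exp_nat_mul, mul_left_comm, Real.log_mul (exp_pos _).ne' hd₀.ne', Real.log_exp]
  ring

lemma exists_int_mem_Icc_of_mem_aliceTarget {β g : ℝ} (hα1 : α < 1) (hΔ : 0 < Δ)
    (hg0 : 0 < g) (hg : exp (-g) = α * β) {x d₀ : ℝ} (hd₀ : 0 < d₀)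
    (hx : ∀ n : ℕ, ∃ I : Ivl, diam I = (α * β) ^ n * d₀ ∧ x ∈ toSet (aliceMove α Δ u I))
    {k n : ℤ} {ζ : ℝ} (hkn : k * Δ - u + Real.log ((1 - α) * d₀) - n * g = ζ)
    (hζ : ζ ∈ Ico 0 Δ) (hk : u - Real.log ((1 - α) * d₀) + Δ ≤ k * Δ) :
    ∃ a : ℤ, x * exp (k * Δ - u) ∈ Icc (a : ℝ) (a + α / (1 - α) * exp ζ) := by
  have hd : 0 < (1 - α) * d₀ := mul_pos (sub_pos.2 hα1) hd₀
  have hn : 0 < n := by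
    have : (0 : ℝ) < n * g := by linarith [hζ.2]
    exact_mod_cast pos_of_mul_pos_left this hg0.le
  lift n to ℕ using hn.le
  obtain ⟨I, hI, hxI⟩ := hx n
  refine exists_int_mem_Icc_of_mem_aliceMove hα1 hΔ ?_ ?_ hζ hxI
  · rw [hI, ← hg]
    positivity
  · rw [hI, log_one_sub_mul_pow_mul hg hd]
    push_cast at hkn
    linarith

end Lattice

lemma sub_notMem_Ioo_of_mem_Icc {X Y w₁ w₂ lo hi : ℝ} {a b : ℤ} (hX : X ∈ Icc (a : ℝ) (a + w₁))
    (hY : Y ∈ Icc (b : ℝ) (b + w₂)) (hlo : w₁ ≤ lo) (hhi : hi ≤ 1 - w₂) (m : ℤ) :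
    X - Y ∉ Ioo (m + lo) (m + hi) := by
  rintro ⟨h₁, h₂⟩
  rcases le_or_gt (a - b) m with h | h
  · have : ((a - b : ℤ) : ℝ) ≤ m := by exact_mod_cast h
    push_cast at this
    linarith [hX.2, hY.1]
  · have : ((m + 1 : ℤ) : ℝ) ≤ a - b := by exact_mod_cast h
    push_cast at this
    linarith [hX.1, hY.2]

section Generic

lemma exists_nat_fract_add_mul_lt {e r : ℝ} (he : e ≠ 0) (her : |e| < r) (t : ℝ) :
    ∃ i : ℕ, Int.fract (t + i * e) < r := by
  have hfract : ∀ (M : ℤ) (z : ℝ), (M : ℝ) ≤ z → z < M + r → Int.fract z < r := by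
    intro M z h₁ h₂
    have : (M : ℝ) ≤ ⌊z⌋ := by exact_mod_cast Int.le_floor.2 h₁
    rw [← Int.self_sub_floor]
    linarith
  rcases he.lt_or_gt with he | he
  · rw [abs_of_neg he] at her
    have h₀ : 0 ≤ (⌊t⌋ - t) / e := div_nonneg_of_nonpos (sub_nonpos.2 (Int.floor_le t)) he.le
    have h₁ := (le_div_iff_of_neg he).1 (Nat.floor_le h₀)
    have h₂ := (div_lt_iff_of_neg he).1 (Nat.lt_floor_add_one ((⌊t⌋ - t) / e))
    exact ⟨⌊(⌊t⌋ - t) / e⌋₊, hfract ⌊t⌋ _ (by linarith) (by linarith)⟩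
  · rw [abs_of_pos he] at her
    have h₀ : 0 ≤ (⌈t⌉ - t) / e := div_nonneg (sub_nonneg.2 (Int.le_ceil t)) he.le
    have h₁ := (div_le_iff₀ he).1 (Nat.le_ceil ((⌈t⌉ - t) / e))
    have h₂ : ((⌈(⌈t⌉ - t) / e⌉₊ : ℝ) - 1) * e < ⌈t⌉ - t :=
      (lt_div_iff₀ he).1 (by linarith [Nat.ceil_lt_add_one h₀])
    exact ⟨⌈(⌈t⌉ - t) / e⌉₊, hfract ⌈t⌉ _ (by linarith) (by linarith)⟩

/-- Dirichlet's theorem gives an arbitrarily short step `p ξ - j ≠ 0` of the rotation by `ξ`. -/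
lemma frequently_fract_intCast_mul_sub_lt {ξ : ℝ} (hξ : Irrational ξ) {r : ℝ} (hr : 0 < r)
    (γ : ℝ) : ∃ᶠ k : ℤ in atTop, Int.fract (k * ξ - γ) < r := by
  rw [frequently_atTop]
  intro K
  obtain ⟨N, hN⟩ := exists_nat_one_div_lt hr
  obtain ⟨j, p, hp, -, hpj⟩ := Real.exists_int_int_abs_mul_sub_le ξ N.succ_pos
  have hNr : 1 / ((N.succ : ℝ) + 1) < r :=
    lt_of_le_of_lt (one_div_le_one_div_of_le (by positivity) (by push_cast; linarith)) hN
  have he : p * ξ - j ≠ 0 := ((hξ.intCast_mul hp.ne').sub_intCast j).ne_zero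
  obtain ⟨i, hi⟩ := exists_nat_fract_add_mul_lt he (hpj.trans_lt hNr) (K * ξ - γ)
  refine ⟨K + i * p, le_add_of_nonneg_right (by positivity), ?_⟩
  have : ((K + i * p : ℤ) : ℝ) * ξ - γ = K * ξ - γ + i * (p * ξ - j) + ((i * j : ℤ) : ℝ) := by
    push_cast
    ring
  rwa [this, Int.fract_add_intCast]

lemma frequently_exists_int_mul_sub_mem_Ico {g Δ r : ℝ} (hg : 0 < g) (hirr : Irrational (Δ / g))
    (hr : 0 < r) (c : ℝ) : ∃ᶠ k : ℤ in atTop, ∃ n : ℤ, k * Δ - c - n * g ∈ Ico 0 r := by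
  refine (frequently_fract_intCast_mul_sub_lt hirr (div_pos hr hg) (c / g)).mono fun k hk => ?_
  refine ⟨⌊k * (Δ / g) - c / g⌋, ?_⟩
  have h : k * Δ - c - ⌊k * (Δ / g) - c / g⌋ * g = Int.fract (k * (Δ / g) - c / g) * g := by
    rw [← Int.self_sub_floor]
    field_simp
  rw [h]
  exact ⟨by positivity, (lt_div_iff₀ hg).1 hk⟩

/-- Genericity of the offset `u` of Alice's scales `e^{u - kΔ}`; the window for `k Δ` modulo `g`
is placed at `c ∈ ℚ` so that only countably many conditions are imposed. -/
def IsGenericOffset (g Δ r lo hi u : ℝ) : Prop :=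
  ∀ q : ℚ, q ≠ 0 → ∀ c : ℚ, ∃ᶠ k : ℤ in atTop,
    (∃ n : ℤ, k * Δ - c - n * g ∈ Ico 0 r) ∧ ∃ m : ℤ, q * exp (k * Δ - u) ∈ Ioo (m + lo) (m + hi)

lemma isOpen_setOf_exists_mul_exp_mem (F : Set ℤ) (q Δ lo hi : ℝ) :
    IsOpen {u : ℝ | ∃ k ∈ F, ∃ m : ℤ, q * exp (k * Δ - u) ∈ Ioo (m + lo) (m + hi)} := by
  have : {u : ℝ | ∃ k ∈ F, ∃ m : ℤ, q * exp (k * Δ - u) ∈ Ioo (m + lo) (m + hi)} =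
      ⋃ k ∈ F, ⋃ m : ℤ, (fun u => q * exp (k * Δ - u)) ⁻¹' Ioo (m + lo) (m + hi) := by
    ext
    simp
  rw [this]
  exact isOpen_biUnion fun k _ => isOpen_iUnion fun m => isOpen_Ioo.preimage (by fun_prop)

lemma exists_int_add_mem_uIcc {x y : ℝ} (h : 1 ≤ |x - y|) (t : ℝ) :
    ∃ m : ℤ, m + t ∈ uIcc x y := by
  have hlen : min x y + 1 ≤ max x y := by rw [abs_sub_comm, ← max_sub_min_eq_abs] at h; linarith
  refine ⟨⌈min x y - t⌉, ?_, ?_⟩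
  · linarith [Int.le_ceil (min x y - t)]
  · linarith [Int.ceil_lt_add_one (min x y - t)]

lemma dense_setOf_exists_mul_exp_mem {F : Set ℤ} (hF : ∃ᶠ k in atTop, k ∈ F) {q Δ lo hi : ℝ}
    (hq : q ≠ 0) (hΔ : 0 < Δ) (hlohi : lo < hi) :
    Dense {u : ℝ | ∃ k ∈ F, ∃ m : ℤ, q * exp (k * Δ - u) ∈ Ioo (m + lo) (m + hi)} := by
  refine dense_of_exists_between fun a b hab => ?_
  obtain ⟨a', ha, hab'⟩ := exists_between hab
  obtain ⟨b', hab'', hb⟩ := exists_between hab'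
  have hC' : exp (-b') < exp (-a') := exp_lt_exp.2 (by linarith)
  have hC : 0 < |q| * (exp (-a') - exp (-b')) := mul_pos (abs_pos.2 hq) (sub_pos.2 hC')
  have hspread : ∀ᶠ k : ℤ in atTop, 1 ≤ |q * exp (k * Δ - a') - q * exp (k * Δ - b')| := by
    have := (tendsto_exp_atTop.comp
      (tendsto_intCast_atTop_atTop.atTop_mul_const hΔ)).atTop_mul_const hC
    filter_upwards [this.eventually_ge_atTop 1] with k hk
    have hsub : q * exp (k * Δ - a') - q * exp (k * Δ - b') =
        exp (k * Δ) * (q * (exp (-a') - exp (-b'))) := by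
      simp only [sub_eq_add_neg, exp_add]
      ring
    rwa [hsub, abs_mul, abs_mul, abs_of_pos (exp_pos _), abs_of_pos (sub_pos.2 hC')]
  obtain ⟨k, hkF, hk⟩ := (hF.and_eventually hspread).exists
  obtain ⟨m, hm⟩ := exists_int_add_mem_uIcc hk ((lo + hi) / 2)
  obtain ⟨v, hv, hfv⟩ := intermediate_value_uIcc (f := fun u => q * exp (k * Δ - u))
    (by fun_prop) hm
  rw [uIcc_of_le hab''.le] at hv
  refine ⟨v, ⟨k, hkF, m, ?_⟩, by linarith [hv.1], by linarith [hv.2]⟩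
  simp only at hfv
  rw [hfv]
  constructor <;> linarith

theorem exists_isGenericOffset {g Δ r lo hi : ℝ} (hg : 0 < g) (hΔ : 0 < Δ)
    (hirr : Irrational (Δ / g)) (hr : 0 < r) (hlohi : lo < hi) :
    ∃ u, IsGenericOffset g Δ r lo hi u := by
  let F : ℚ → ℤ → Set ℤ := fun c K => {k | K ≤ k ∧ ∃ n : ℤ, k * Δ - c - n * g ∈ Ico 0 r}
  let U : {q : ℚ // q ≠ 0} × ℚ × ℤ → Set ℝ := fun i =>
    {u | ∃ k ∈ F i.2.1 i.2.2, ∃ m : ℤ, (i.1 : ℝ) * exp (k * Δ - u) ∈ Ioo (m + lo) (m + hi)}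
  have hdense : ∀ i, Dense (U i) := by
    rintro ⟨⟨q, hq⟩, c, K⟩
    refine dense_setOf_exists_mul_exp_mem (F := F c K) ?_ (Rat.cast_ne_zero.2 hq) hΔ hlohi
    exact ((frequently_exists_int_mul_sub_mem_Ico hg hirr hr c).and_eventually
      (eventually_ge_atTop K)).mono fun _ h => ⟨h.2, h.1⟩
  obtain ⟨u, hu⟩ := (dense_iInter_of_isOpen
    (fun i => isOpen_setOf_exists_mul_exp_mem _ _ _ _ _) hdense).nonempty
  refine ⟨u, fun q hq c => frequently_atTop.2 fun K => ?_⟩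
  obtain ⟨k, ⟨hKk, hwin⟩, hband⟩ := mem_iInter.1 hu ⟨⟨q, hq⟩, c, K⟩
  exact ⟨k, hKk, hwin, hband⟩

end Generic

lemma exists_int_sub_mul_mem_Ico_or {g θ : ℝ} (hg : 0 < g) (hθ : g < 2 * θ) (s t : ℝ) :
    (∃ j : ℤ, s - t - j * g ∈ Ico 0 θ) ∨ ∃ j : ℤ, t - s - j * g ∈ Ico 0 θ := by
  have h₁ : ⌊(s - t) / g⌋ * g ≤ s - t := (le_div_iff₀ hg).1 (Int.floor_le _)
  have h₂ : s - t < (⌊(s - t) / g⌋ + 1) * g := (div_lt_iff₀ hg).1 (Int.lt_floor_add_one _)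
  by_cases h : s - t - ⌊(s - t) / g⌋ * g < θ
  · exact .inl ⟨_, by linarith, h⟩
  · exact .inr ⟨-⌊(s - t) / g⌋ - 1, by push_cast; linarith, by push_cast; linarith⟩

section PartialVitali

variable {α β g Δ ε u : ℝ}

/-- Choose `k` making the phase of `y` smaller than `ε`: the phase of `x` exceeds it by less than
`Δ - ε`, and both points are pinned near the lattice of step `e^{u - kΔ}`, which `q` avoids. -/
lemma false_of_mem_aliceTarget (hα0 : 0 < α) (hα1 : α < 1) (hg0 : 0 < g)
    (hg : exp (-g) = α * β) (hε : 0 < ε)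
    (hu : IsGenericOffset g Δ (ε / 2) (α / (1 - α) * exp Δ) (1 - α / (1 - α) * exp ε) u)
    {x y d₁ d₂ : ℝ} (hd₁ : 0 < d₁) (hd₂ : 0 < d₂)
    (hx : ∀ n : ℕ, ∃ I : Ivl, diam I = (α * β) ^ n * d₁ ∧ x ∈ toSet (aliceMove α Δ u I))
    (hy : ∀ n : ℕ, ∃ I : Ivl, diam I = (α * β) ^ n * d₂ ∧ y ∈ toSet (aliceMove α Δ u I))
    {q : ℚ} (hq : q ≠ 0) (hxy : x - y = q) {j : ℤ}
    (hφ : Real.log ((1 - α) * d₁) - Real.log ((1 - α) * d₂) - j * g ∈ Ico 0 (Δ - ε)) :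
    False := by
  have hρ : 0 ≤ α / (1 - α) := div_nonneg hα0.le (sub_pos.2 hα1).le
  set ℓ₁ := Real.log ((1 - α) * d₁)
  set ℓ₂ := Real.log ((1 - α) * d₂)
  have hεΔ : ε < Δ := by linarith [hφ.1, hφ.2]
  obtain ⟨c, hc₁, hc₂⟩ := exists_rat_btwn (show u - ℓ₂ < u - ℓ₂ + ε / 2 by linarith)
  have hlarge : ∀ᶠ k : ℤ in atTop, max (u - ℓ₁) (u - ℓ₂) + Δ ≤ k * Δ :=
    (tendsto_intCast_atTop_atTop.atTop_mul_const (by linarith)).eventually_ge_atTop _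
  obtain ⟨k, ⟨⟨n, hn₁, hn₂⟩, m, hm⟩, hk⟩ := ((hu q hq c).and_eventually hlarge).exists
  obtain ⟨b, hb⟩ := exists_int_mem_Icc_of_mem_aliceTarget hα1 (by linarith) hg0 hg hd₂ hy
    (k := k) (n := n) rfl ⟨by linarith, by linarith⟩ (by linarith [le_max_right (u - ℓ₁) (u - ℓ₂)])
  obtain ⟨a, ha⟩ := exists_int_mem_Icc_of_mem_aliceTarget hα1 (by linarith) hg0 hg hd₁ hx
    (k := k) (n := n + j) rfl ⟨by push_cast; linarith [hφ.1], by push_cast; linarith [hφ.2]⟩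
    (by linarith [le_max_left (u - ℓ₁) (u - ℓ₂)])
  have hw₁ : α / (1 - α) * exp (k * Δ - u + ℓ₁ - (n + j : ℤ) * g) ≤ α / (1 - α) * exp Δ := by
    gcongr
    push_cast
    linarith [hφ.2]
  have hw₂ : 1 - α / (1 - α) * exp ε ≤ 1 - α / (1 - α) * exp (k * Δ - u + ℓ₂ - n * g) := by
    gcongr
    linarith
  exact sub_notMem_Ioo_of_mem_Icc ha hb hw₁ hw₂ m (by rwa [← sub_mul, hxy])

theorem isPartialVitali_aliceTarget (hα0 : 0 < α) (hα1 : α < 1) (hg0 : 0 < g)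
    (hg : exp (-g) = α * β) (hε : 0 < ε) (hΔ : g / 2 + ε < Δ)
    (hu : IsGenericOffset g Δ (ε / 2) (α / (1 - α) * exp Δ) (1 - α / (1 - α) * exp ε) u) :
    IsPartialVitali (aliceTarget α β Δ u) := by
  rintro x ⟨d₁, hd₁, hx⟩ y ⟨d₂, hd₂, hy⟩ ⟨q, hxy⟩
  by_contra hne
  have hq : q ≠ 0 := by
    rintro rfl
    exact hne (by simpa [sub_eq_zero] using hxy)
  rcases exists_int_sub_mul_mem_Ico_or hg0 (show g < 2 * (Δ - ε) by linarith)
    (Real.log ((1 - α) * d₁)) (Real.log ((1 - α) * d₂)) with ⟨j, hj⟩ | ⟨j, hj⟩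
  · exact false_of_mem_aliceTarget hα0 hα1 hg0 hg hε hu hd₁ hd₂ hx hy hq hxy hj
  · exact false_of_mem_aliceTarget hα0 hα1 hg0 hg hε hu hd₂ hd₁ hy hx (neg_ne_zero.2 hq)
      (by push_cast; linarith) hj

end PartialVitali

lemma exists_irrational_ratio_params {ρ g : ℝ} (hρ : 0 ≤ ρ) (hg : 0 < g)
    (h : ρ * (exp (g / 2) + 1) < 1) :
    ∃ ε Δ, 0 < ε ∧ g / 2 + ε < Δ ∧ Irrational (Δ / g) ∧ ρ * (exp Δ + exp ε) < 1 := by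
  have hev : ∀ᶠ x in 𝓝 (0 : ℝ), ρ * (exp (g / 2 + 2 * x) + exp x) < 1 :=
    (show Continuous fun x => ρ * (exp (g / 2 + 2 * x) + exp x) by
      fun_prop).continuousAt.eventually_lt continuousAt_const (by simpa using h)
  obtain ⟨ε, hε1, hε⟩ :=
    ((eventually_nhdsWithin_of_eventually_nhds hev).and (self_mem_nhdsWithin (s := Ioi 0))).exists
  obtain ⟨ξ, hξ, h₁, h₂⟩ := exists_irrational_btwn
    (show (g / 2 + ε) / g < (g / 2 + 2 * ε) / g by gcongr; linarith)
  refine ⟨ε, ξ * g, hε, (div_lt_iff₀ hg).1 h₁, by rwa [mul_div_cancel_right₀ _ hg.ne'], ?_⟩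
  calc ρ * (exp (ξ * g) + exp ε) ≤ ρ * (exp (g / 2 + 2 * ε) + exp ε) := by
        gcongr
        exact ((lt_div_iff₀ hg).1 h₂).le
    _ < 1 := hε1

/-- `e^{g/2} = 1/√(αβ) < (1 - 2α)/α`. -/
lemma div_one_sub_mul_exp_half_add_one_lt {α β g : ℝ} (hα0 : 0 < α) (hα2 : α < 1 / 2)
    (hβ : α / (1 - 2 * α) ^ 2 < β) (hg : exp (-g) = α * β) :
    α / (1 - α) * (exp (g / 2) + 1) < 1 := by
  have hβ0 : 0 < β := lt_of_le_of_lt (by positivity) hβ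
  have hs : α * β * exp (g / 2) ^ 2 = 1 := by
    rw [← hg, ← exp_nat_mul, ← exp_add, show -g + (2 : ℕ) * (g / 2) = 0 by push_cast; ring,
      exp_zero]
  have hβ' : α < β * (1 - 2 * α) ^ 2 := (div_lt_iff₀ (by nlinarith)).1 hβ
  have has : α * exp (g / 2) < 1 - 2 * α := by
    by_contra! h
    have h₁ : β * (1 - 2 * α) ^ 2 ≤ β * (α * exp (g / 2)) ^ 2 :=
      mul_le_mul_of_nonneg_left (pow_le_pow_left₀ (by linarith) h 2) hβ0.le
    have h₂ : β * (α * exp (g / 2)) ^ 2 = α := by linear_combination α * hs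
    linarith
  rw [div_mul_eq_mul_div, div_lt_one (by linarith)]
  linarith

theorem exists_isVitali_winning {α β : ℝ} (hα0 : 0 < α) (hα2 : α < 1 / 2)
    (hβ : α / (1 - 2 * α) ^ 2 < β) (hβ1 : β < 1) :
    ∃ V : Set ℝ, IsVitali V ∧ Winning α β V := by
  have hβ0 : 0 < β := lt_of_le_of_lt (by positivity) hβ
  set g := -Real.log (α * β)
  have hg : exp (-g) = α * β := by rw [neg_neg, exp_log (by positivity)]
  have hg0 : 0 < g := neg_pos.2 (Real.log_neg (by positivity) (by nlinarith))
  obtain ⟨ε, Δ, hε, hΔ, hirr, hband⟩ := exists_irrational_ratio_params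
    (div_nonneg hα0.le (by linarith)) hg0 (div_one_sub_mul_exp_half_add_one_lt hα0 hα2 hβ hg)
  obtain ⟨u, hu⟩ := exists_isGenericOffset hg0 (by linarith) hirr (half_pos hε)
    (show α / (1 - α) * exp Δ < 1 - α / (1 - α) * exp ε by linarith)
  obtain ⟨V, hWV, hV⟩ :=
    (isPartialVitali_aliceTarget hα0 (by linarith) hg0 hg hε hΔ hu).exists_isVitali_superset
  exact ⟨V, hV, aliceStrategy α Δ u, aliceStrategy_legal hα0 (by linarith) hβ0 (by linarith),
    fun B hB x hx => hWV (mem_aliceTarget_of_bobPlays hB hx)⟩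

/-- main theorem: if `0 < α < 1/12` and
`α/(1 - 5α)² < β < 1` then there is an `(α,β)`-winning Vitali set. -/
theorem stmt13 (α β : ℝ) (hα0 : 0 < α) (hα12 : α < 1/12)
    (hβlow : α / (1 - 5 * α) ^ 2 < β) (hβ1 : β < 1) :
    ∃ V : Set ℝ, IsVitali V ∧ Winning α β V := by
  refine exists_isVitali_winning hα0 (by linarith) (lt_of_le_of_lt ?_ hβlow) hβ1
  exact div_le_div_of_nonneg_left hα0.le (pow_pos (by linarith) 2)
    (pow_le_pow_left₀ (by linarith) (by linarith) 2)

end Schmidt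
end
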